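/- Let L ⊆ Σ* be a regular language. Then L has finite variation if and only if its syntactic monoid M(L) is R-trivial. -/

import Mathlib

open Matrix

/-- Two words are Nerode-equivalent w.r.t. `L` (they reach the same state of the
minimal automaton of `L`) if they have the same residuals:
`∀ z, u z ∈ L ↔ u' z ∈ L`. -/
def NerodeEquiv {σ : Type} (L : Set (List σ)) (u u' : List σ) : Prop :=
  ∀ z : List σ, u ++ z ∈ L ↔ u' ++ z ∈ L

/-- The variation `var_L(w)` of a word `w = w₁⋯w_n`: the number of indices
`0 ≤ k < n` such that the prefixes `w₁⋯w_k` and `w₁⋯w_{k+1}` are not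
Nerode-equivalent. -/
noncomputable def variation {σ : Type} (L : Set (List σ)) (w : List σ) : ℕ :=
  Nat.card {k : ℕ // k < w.length ∧ ¬ NerodeEquiv L (w.take k) (w.take (k + 1))}

/-- A language has finite variation if `sup_{w} var_L(w) < ∞`. -/
def FiniteVariation {σ : Type} (L : Set (List σ)) : Prop :=
  ∃ B : ℕ, ∀ w : List σ, variation L w ≤ B
/-- The syntactic congruence of a language `L` on the free monoid:
`x ∼_L y` iff for all contexts `a, b`, `a x b ∈ L ↔ a y b ∈ L`. -/
def synCon {σ : Type} (L : Set (FreeMonoid σ)) : Con (FreeMonoid σ) where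
  r x y := ∀ a b : FreeMonoid σ, a * x * b ∈ L ↔ a * y * b ∈ L
  iseqv :=
    ⟨fun _ _ _ => Iff.rfl, fun h a b => (h a b).symm, fun h₁ h₂ a b => (h₁ a b).trans (h₂ a b)⟩
  mul' := by
    intro w x y z hw hy a b
    have h1 : a * (w * y) * b ∈ L ↔ a * (x * y) * b ∈ L := by
      have := hw a (y * b); simpa [mul_assoc] using this
    have h2 : a * (x * y) * b ∈ L ↔ a * (x * z) * b ∈ L := by
      have := hy (a * x) b; simpa [mul_assoc] using this
    exact h1.trans h2

/-- The syntactic monoid `M(L) = Σ*/∼_L` of a language `L`. -/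
def SynMonoid {σ : Type} (L : Set (FreeMonoid σ)) : Type := (synCon L).Quotient

noncomputable instance {σ : Type} (L : Set (FreeMonoid σ)) : Monoid (SynMonoid L) :=
  inferInstanceAs (Monoid (synCon L).Quotient)

noncomputable instance {σ : Type} (L : Set (List σ)) : Monoid (SynMonoid (σ := σ) L) :=
  inferInstanceAs (Monoid (synCon (σ := σ) L).Quotient)

/-- A monoid is `J`-trivial if `M a M = M b M` implies `a = b`. -/
def IsJTrivial (M : Type*) [Monoid M] : Prop :=
  ∀ a b : M,
    (Set.range fun p : M × M => p.1 * a * p.2) = (Set.range fun p : M × M => p.1 * b * p.2) →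
      a = b

/-- A monoid is `R`-trivial if `a M = b M` implies `a = b`. -/
def IsRTrivial (M : Type*) [Monoid M] : Prop :=
  ∀ a b : M, (Set.range fun x => a * x) = (Set.range fun x => b * x) → a = b

/-- A monoid is a block-group if every `R`-class and every `L`-class contains at most
one idempotent. -/
def IsBlockGroup (M : Type*) [Monoid M] : Prop :=
  ∀ e f : M, IsIdempotentElem e → IsIdempotentElem f →
    (((Set.range fun x => e * x) = Set.range fun x => f * x) ∨
      ((Set.range fun x => x * e) = Set.range fun x => x * f)) → e = f


/-!
In an `R`-trivial monoid, `a * x * y = a` forces `a * x = a`. For `k < k'` the class of the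
length-`k'` prefix of a word is that of the length-`k` prefix times `w[k]` times something, so if
two Nerode-changing steps `k < k'` had equal prefix classes, step `k` would not even change the
syntactic class. Hence the variation is at most `|M(L)|`, finite for regular `L`.

Conversely, if `aM = bM` with `a ≠ b`, write `b = a t`, `a = b s` and pick a prefix `p` such that
`p a`, `p b` are not Nerode-equivalent. Each prefix `p a (t s)ⁱ` has the class of `p a` and its
extension by `t` that of `p b`, so each of the `n` blocks `t` of `p a (t s)ⁿ` contains a
Nerode-changing step.
-/

section

variable {σ : Type} {L : Set (List σ)}

def SynMonoid.ofList (L : Set (List σ)) (w : List σ) : SynMonoid (σ := σ) L :=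
  (synCon (σ := σ) L).mk' (FreeMonoid.ofList w)

namespace SynMonoid

theorem ofList_append (u v : List σ) : ofList L (u ++ v) = ofList L u * ofList L v := rfl

theorem ofList_surjective : Function.Surjective (ofList L) := Quotient.exists_rep

theorem ofList_eq_ofList_iff {u v : List σ} :
    ofList L u = ofList L v ↔ ∀ p, NerodeEquiv L (p ++ u) (p ++ v) :=
  Con.eq _

end SynMonoid

open SynMonoid

namespace NerodeEquiv

theorem refl (u : List σ) : NerodeEquiv L u u := fun _ => Iff.rfl

theorem trans {u v w : List σ} (h₁ : NerodeEquiv L u v) (h₂ : NerodeEquiv L v w) :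
    NerodeEquiv L u w := fun z => (h₁ z).trans (h₂ z)

theorem of_ofList_eq {u v : List σ} (h : ofList L u = ofList L v) : NerodeEquiv L u v :=
  ofList_eq_ofList_iff.mp h []

end NerodeEquiv

open Classical in
noncomputable def badSteps (L : Set (List σ)) (w : List σ) : Finset ℕ :=
  {k ∈ Finset.range w.length | ¬ NerodeEquiv L (w.take k) (w.take (k + 1))}

theorem variation_eq_card_badSteps (w : List σ) : variation L w = (badSteps L w).card := by
  rw [variation, ← Nat.card_eq_finsetCard]
  simp [badSteps]

theorem badSteps_subset_append (u v : List σ) : badSteps L u ⊆ badSteps L (u ++ v) := by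
  intro k hk
  simp only [badSteps, Finset.mem_filter, Finset.mem_range] at hk ⊢
  rw [List.take_append_of_le_length hk.1.le, List.take_append_of_le_length hk.1]
  exact ⟨by simp; omega, hk.2⟩

theorem exists_mem_badSteps_append {u t : List σ} (h : ¬ NerodeEquiv L u (u ++ t)) :
    ∃ k ∈ badSteps L (u ++ t), u.length ≤ k := by
  induction t using List.reverseRecOn with
  | nil => exact absurd (by simpa using NerodeEquiv.refl u) h
  | append_singleton t a ih =>
    by_cases hstep : NerodeEquiv L (u ++ t) (u ++ t ++ [a])
    · obtain ⟨k, hk, hle⟩ := ih fun h' => h (by simpa using h'.trans hstep)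
      exact ⟨k, by simpa using badSteps_subset_append (u ++ t) [a] hk, hle⟩
    · refine ⟨(u ++ t).length, ?_, by simp⟩
      have h₁ : (u ++ t ++ [a]).take (u ++ t).length = u ++ t := List.take_left' rfl
      have h₂ : (u ++ t ++ [a]).take ((u ++ t).length + 1) = u ++ t ++ [a] :=
        List.take_of_length_le (by simp; omega)
      rw [← List.append_assoc]
      simp only [badSteps, Finset.mem_filter, Finset.mem_range, h₁, h₂]
      exact ⟨by simp, hstep⟩

theorem variation_le_append (u v : List σ) : variation L u ≤ variation L (u ++ v) := by
  simpa only [variation_eq_card_badSteps] using Finset.card_le_card (badSteps_subset_append u v)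

theorem variation_lt_append {u t : List σ} (h : ¬ NerodeEquiv L u (u ++ t)) :
    variation L u < variation L (u ++ t) := by
  obtain ⟨k, hk, hle⟩ := exists_mem_badSteps_append h
  simp only [variation_eq_card_badSteps]
  refine Finset.card_lt_card ((Finset.ssubset_iff_of_subset (badSteps_subset_append u t)).mpr
    ⟨k, hk, fun hk' => ?_⟩)
  simp [badSteps] at hk'
  omega

section RTrivial

variable {M : Type*} [Monoid M]

theorem IsRTrivial.mul_eq_self_of_mul_mul_eq_self (hR : IsRTrivial M) {a x y : M}
    (h : a * x * y = a) : a * x = a := by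
  refine hR _ _ (Set.Subset.antisymm ?_ ?_)
  · rintro _ ⟨z, rfl⟩
    exact ⟨x * z, (mul_assoc a x z).symm⟩
  · rintro _ ⟨z, rfl⟩
    exact ⟨y * z, by simp only [← mul_assoc, h]⟩

theorem exists_ne_mul_eq_of_not_isRTrivial (h : ¬ IsRTrivial M) :
    ∃ a b t s : M, a ≠ b ∧ a * t = b ∧ b * s = a := by
  simp only [IsRTrivial, not_forall] at h
  obtain ⟨a, b, hab, hne⟩ := h
  obtain ⟨t, ht⟩ : b ∈ Set.range (a * ·) := hab ▸ ⟨1, mul_one b⟩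
  obtain ⟨s, hs⟩ : a ∈ Set.range (b * ·) := hab ▸ ⟨1, mul_one a⟩
  exact ⟨a, b, t, s, hne, ht, hs⟩

end RTrivial

theorem ofList_take_ne_of_mem_badSteps (hR : IsRTrivial (SynMonoid (σ := σ) L)) {w : List σ}
    {k k' : ℕ} (hk : k ∈ badSteps L w) (hkk' : k < k') :
    ofList L (w.take k) ≠ ofList L (w.take k') := by
  obtain ⟨x, hx⟩ := List.take_prefix_take_left (l := w) (Nat.le_succ k)
  obtain ⟨y, hy⟩ := List.take_prefix_take_left (l := w) hkk'
  intro heq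
  have hloop : ofList L (w.take k) * ofList L x * ofList L y = ofList L (w.take k) := by
    rw [← ofList_append, ← ofList_append, hx, hy, heq]
  have hstep := hR.mul_eq_self_of_mul_mul_eq_self hloop
  rw [← ofList_append, hx] at hstep
  simp only [badSteps, Finset.mem_filter] at hk
  exact hk.2 (NerodeEquiv.of_ofList_eq hstep.symm)

theorem variation_le_card_synMonoid [Finite (SynMonoid (σ := σ) L)]
    (hR : IsRTrivial (SynMonoid (σ := σ) L)) (w : List σ) :
    variation L w ≤ Nat.card (SynMonoid (σ := σ) L) := by
  have := Fintype.ofFinite (SynMonoid (σ := σ) L)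
  rw [variation_eq_card_badSteps, Nat.card_eq_fintype_card, ← Finset.card_univ]
  refine Finset.card_le_card_of_injOn (fun k => ofList L (w.take k))
    (fun _ _ => Finset.mem_univ _) ?_
  intro k hk k' hk' heq
  rcases lt_trichotomy k k' with hlt | rfl | hlt
  · exact absurd heq (ofList_take_ne_of_mem_badSteps hR hk hlt)
  · rfl
  · exact absurd heq.symm (ofList_take_ne_of_mem_badSteps hR hk' hlt)

theorem FiniteVariation.of_isRTrivial [Finite (SynMonoid (σ := σ) L)]
    (hR : IsRTrivial (SynMonoid (σ := σ) L)) : FiniteVariation L :=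
  ⟨_, variation_le_card_synMonoid hR⟩

theorem not_finiteVariation_of_loop {u t s : List σ}
    (hloop : ofList L (u ++ t ++ s) = ofList L u) (hsep : ¬ NerodeEquiv L u (u ++ t)) :
    ¬ FiniteVariation L := by
  set P : ℕ → List σ := fun i => (· ++ (t ++ s))^[i] u
  have hP_succ (i : ℕ) : P (i + 1) = P i ++ t ++ s := by
    simp only [P, Function.iterate_succ_apply', List.append_assoc]
  have hP_ofList (i : ℕ) : ofList L (P i) = ofList L u := by
    induction i with
    | zero => rfl
    | succ i ih => rw [hP_succ, ofList_append, ofList_append, ih, ← ofList_append,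
        ← ofList_append, hloop]
  have hP_sep (i : ℕ) : ¬ NerodeEquiv L (P i) (P i ++ t) := fun h => hsep <|
    (NerodeEquiv.of_ofList_eq (hP_ofList i).symm).trans <| h.trans <|
      NerodeEquiv.of_ofList_eq (by rw [ofList_append, hP_ofList, ofList_append])
  have hP_variation (i : ℕ) : i ≤ variation L (P i) := by
    induction i with
    | zero => exact Nat.zero_le _
    | succ i ih =>
      rw [hP_succ]
      exact (ih.trans_lt (variation_lt_append (hP_sep i))).trans_le (variation_le_append _ s)
  rintro ⟨B, hB⟩
  exact (hP_variation (B + 1)).not_gt (Nat.lt_succ_of_le (hB _))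

theorem FiniteVariation.isRTrivial (h : FiniteVariation L) :
    IsRTrivial (SynMonoid (σ := σ) L) := by
  by_contra hR
  obtain ⟨a, b, t, s, hne, hab, hba⟩ := exists_ne_mul_eq_of_not_isRTrivial hR
  obtain ⟨x, rfl⟩ := ofList_surjective a
  obtain ⟨y, rfl⟩ := ofList_surjective b
  obtain ⟨t, rfl⟩ := ofList_surjective t
  obtain ⟨s, rfl⟩ := ofList_surjective s
  obtain ⟨p, hp⟩ : ∃ p, ¬ NerodeEquiv L (p ++ x) (p ++ y) := by
    simpa [ofList_eq_ofList_iff] using hne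
  refine not_finiteVariation_of_loop (u := p ++ x) (t := t) (s := s) ?_ ?_ h
  · simp only [ofList_append, mul_assoc, hab, hba]
  · refine fun hsep => hp (hsep.trans (NerodeEquiv.of_ofList_eq ?_))
    simp only [ofList_append, mul_assoc, hab]

theorem SynMonoid.finite_of_dfa {Q : Type} [Finite Q] (M : DFA σ Q)
    (hM : ∀ w, w ∈ M.accepts ↔ w ∈ L) : Finite (SynMonoid (σ := σ) L) := by
  let act : List σ → Q → Q := fun w q => M.evalFrom q w
  have hfactor : (ofList L).FactorsThrough act := by
    intro u v huv
    refine ofList_eq_ofList_iff.mpr fun p z => ?_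
    simp only [← hM, DFA.mem_accepts, DFA.eval, DFA.evalFrom_of_append]
    rw [show M.evalFrom _ u = M.evalFrom _ v from congrFun huv _]
  refine Finite.of_surjective (Function.extend act (ofList L) fun _ => 1) fun m => ?_
  obtain ⟨w, rfl⟩ := ofList_surjective m
  exact ⟨act w, hfactor.extend_apply _ w⟩

end

theorem finiteVariation_iff_rTrivial
    (σ : Type) (L : Set (List σ))
    (hreg : ∃ (Q : Type) (_ : Fintype Q) (M : DFA σ Q), ∀ w, w ∈ M.accepts ↔ w ∈ L) :
    FiniteVariation L ↔ IsRTrivial (SynMonoid (σ := σ) L) := by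
  obtain ⟨Q, _, M, hM⟩ := hreg
  have := SynMonoid.finite_of_dfa M hM
  exact ⟨FiniteVariation.isRTrivial, FiniteVariation.of_isRTrivial⟩
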